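/- Lemma on numerator bound (fundamental lemma): let Aₙ ⊆ 𝔽 be convex and d εₙ²-separated from f⋆ with respect to h, i.e., h(f⋆,f) > d εₙ² for all f ∈ Aₙ and Aₙ closed under mixtures. Then the numerator L_{n,n} = ∫_{Aₙ} ∏_{i=1}^{n} (f(Y_i)/f⋆(Y_i)) dΠ(f) satisfies E[L_{n,n}^{1/2}] ≤ Π(Aₙ)^{1/2} e^{−d n εₙ²}. -/

import Mathlib

/-!
Write `L_n(ω) = ∫_A ∏_{i<n} g(ω_i)/f⋆(ω_i) dΠ(g)`. Once `ω` is fixed, `L_{n+1}(ω, y) / L_n(ω)`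
is `f̂(y)/f⋆(y)`, where the predictive density `f̂` is the mixture of the densities of `A` under
the prior restricted to `A` and reweighted by the likelihood of `ω`. By convexity `f̂ ∈ A`, hence
`∫ (f̂/f⋆)^{1/2} f⋆ dμ = 1 - h(f⋆, f̂) ≤ 1 - dε²`. Integrating out the observations one at a time
gives `E[L_n^{1/2}] ≤ Π(A)^{1/2} (1 - dε²)^n ≤ Π(A)^{1/2} e^{-dnε²}`; in `ℝ≥0∞` only the
inequality half of Tonelli's theorem is needed for this, which holds without measurability.

Measurability does matter for the predictive density itself, since `(y, g) ↦ g y` need not be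
jointly measurable for the product σ-algebra on `Y → ℝ`. But `μ` turns out to be carried by a
countable set, and on the measurable atoms of a countable set evaluation factors through a
measurable map to `ℕ`.
-/

open MeasureTheory Set Filter
open scoped ENNReal

section Integrals

variable {α : Type*} [MeasurableSpace α] {μ : Measure α}

theorem ofReal_integral_le_lintegral_ofReal (f : α → ℝ) :
    ENNReal.ofReal (∫ a, f a ∂μ) ≤ ∫⁻ a, ENNReal.ofReal (f a) ∂μ := by
  by_cases hf : Integrable f μ
  · rw [integral_eq_lintegral_pos_part_sub_lintegral_neg_part hf]
    exact (ENNReal.ofReal_le_ofReal (sub_le_self _ ENNReal.toReal_nonneg)).trans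
      ENNReal.ofReal_toReal_le
  · simp [integral_undef hf]

theorem lintegral_ofReal_eq_one {g : α → ℝ} (hg : 0 ≤ᵐ[μ] g)
    (hint : ∫ a, g a ∂μ = 1) : ∫⁻ a, ENNReal.ofReal (g a) ∂μ = 1 := by
  rw [← ofReal_integral_eq_lintegral_ofReal (.of_integral_ne_zero (by simp [hint])) hg, hint,
    ENNReal.ofReal_one]

theorem isProbabilityMeasure_withDensity_ofReal {f : α → ℝ} (hf : 0 ≤ᵐ[μ] f)
    (hint : ∫ a, f a ∂μ = 1) : IsProbabilityMeasure (μ.withDensity fun a => ENNReal.ofReal (f a)) :=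
  ⟨by rw [withDensity_apply _ .univ, Measure.restrict_univ, lintegral_ofReal_eq_one hf hint]⟩

theorem integrable_sqrt_mul_sqrt {f g : α → ℝ} (hf : Integrable f μ) (hg : Integrable g μ) :
    Integrable (fun a => √(f a) * √(g a)) μ := by
  refine (hf.norm.add hg.norm).mono'
    ((Real.continuous_sqrt.comp_aestronglyMeasurable hf.1).mul
      (Real.continuous_sqrt.comp_aestronglyMeasurable hg.1)) (.of_forall fun a => ?_)
  simp only [Pi.add_apply, Real.norm_eq_abs]
  rw [abs_of_nonneg (by positivity)]
  nlinarith [sq_nonneg (√(f a) - √(g a)), Real.sq_sqrt' (x := f a), Real.sq_sqrt' (x := g a),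
    max_le (le_abs_self (f a)) (abs_nonneg (f a)), max_le (le_abs_self (g a)) (abs_nonneg (g a))]

theorem half_integral_sq_sub_sqrt {f g : α → ℝ} (hf : Integrable f μ) (hg : Integrable g μ)
    (hf₀ : 0 ≤ᵐ[μ] f) (hg₀ : 0 ≤ᵐ[μ] g) :
    1 / 2 * ∫ a, (√(f a) - √(g a)) ^ 2 ∂μ
      = (∫ a, f a ∂μ + ∫ a, g a ∂μ) / 2 - ∫ a, √(f a) * √(g a) ∂μ := by
  have hexp : (fun a => (√(f a) - √(g a)) ^ 2)
      =ᵐ[μ] fun a => f a + g a - 2 * (√(f a) * √(g a)) := by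
    filter_upwards [hf₀, hg₀] with a hfa hga
    rw [sub_sq, Real.sq_sqrt hfa, Real.sq_sqrt hga]
    ring
  rw [integral_congr_ae hexp, integral_sub (f := fun a => f a + g a) (hf.add hg)
    ((integrable_sqrt_mul_sqrt hf hg).const_mul 2), integral_add hf hg, integral_const_mul]
  ring

theorem half_integral_sq_sub_sqrt_le_one {f g : α → ℝ} (hf₀ : 0 ≤ᵐ[μ] f) (hg₀ : 0 ≤ᵐ[μ] g)
    (hf : ∫ a, f a ∂μ = 1) (hg : ∫ a, g a ∂μ = 1) :
    1 / 2 * ∫ a, (√(f a) - √(g a)) ^ 2 ∂μ ≤ 1 := by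
  rw [half_integral_sq_sub_sqrt (.of_integral_ne_zero (by simp [hf]))
    (.of_integral_ne_zero (by simp [hg])) hf₀ hg₀, hf, hg]
  linarith [integral_nonneg (μ := μ) (f := fun a => √(f a) * √(g a)) fun a => by positivity]

theorem lintegral_pi_fin_succ_le {ν : Measure α} [SigmaFinite ν] {n : ℕ}
    (F : (Fin (n + 1) → α) → ℝ≥0∞) :
    ∫⁻ x, F x ∂Measure.pi (fun _ => ν)
      ≤ ∫⁻ ω, ∫⁻ y, F (Fin.snoc ω y) ∂ν ∂Measure.pi (fun _ => ν) := by
  have hsplit := (measurePreserving_piFinSuccAbove (fun _ : Fin (n + 1) => ν) (Fin.last n)).symm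
  rw [← hsplit.lintegral_comp_emb (MeasurableEquiv.measurableEmbedding _), ← lintegral_prod_swap]
  refine (lintegral_prod_le _).trans_eq ?_
  simp only [Prod.swap_prod_mk]
  congr! with ω y
  exact Fin.insertNth_last' y ω

theorem ENNReal.ofReal_mul_ofReal_div_rpow_half {a b : ℝ} (ha : 0 < a) (hb : 0 ≤ b) :
    ENNReal.ofReal a * ENNReal.ofReal (b / a) ^ (1 / 2 : ℝ) = ENNReal.ofReal (√a * √b) := by
  rw [ENNReal.ofReal_rpow_of_nonneg (div_nonneg hb ha.le) (by norm_num), ← Real.sqrt_eq_rpow,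
    ← ENNReal.ofReal_mul ha.le, Real.sqrt_div' _ ha.le, mul_div_left_comm, Real.div_sqrt,
    mul_comm]

theorem ENNReal.ofReal_one_sub_pow_le_ofReal_exp (x : ℝ) (n : ℕ) :
    ENNReal.ofReal (1 - x) ^ n ≤ ENNReal.ofReal (Real.exp (-(n * x))) := by
  rw [neg_mul_eq_mul_neg, Real.exp_nat_mul, ENNReal.ofReal_pow (Real.exp_pos _).le]
  gcongr
  exact Real.one_sub_le_exp_neg x

end Integrals

section MeasurableAtom

variable {Y : Type*} [MeasurableSpace Y]

theorem Measurable.eq_of_mem_measurableAtom {β : Type*} [MeasurableSpace β]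
    [MeasurableSingletonClass β] {f : Y → β} (hf : Measurable f) {x y : Y}
    (hy : y ∈ measurableAtom x) : f y = f x :=
  mem_of_mem_measurableAtom hy (hf (measurableSet_singleton (f x))) rfl

theorem MeasurableSet.measurableAtom_inter_of_countable {D : Set Y} (hD : MeasurableSet D)
    (hDc : D.Countable) (x : Y) : MeasurableSet (measurableAtom x ∩ D) := by
  have hsep : ∀ y ∈ D \ measurableAtom x, ∃ s, x ∈ s ∧ MeasurableSet s ∧ y ∉ s := by
    intro y hy
    simpa [measurableAtom] using hy.2
  choose! s hxs hs hys using hsep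
  have : measurableAtom x ∩ D = D ∩ ⋂ y ∈ D \ measurableAtom x, s y := by
    ext z
    simp only [mem_inter_iff, mem_iInter]
    refine ⟨fun hz => ⟨hz.2, fun y hy => mem_of_mem_measurableAtom hz.1 (hs y hy) (hxs y hy)⟩,
      fun hz => ⟨by_contra fun hzx => hys z ⟨hz.1, hzx⟩ (hz.2 z ⟨hz.1, hzx⟩), hz.1⟩⟩
  rw [this]
  exact hD.inter (.biInter (hDc.mono sdiff_subset) fun y hy => hs y hy)

theorem exists_measurable_index_measurableAtom [Nonempty Y] {D : Set Y}
    (hD : MeasurableSet D) (hDc : D.Countable) :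
    ∃ (ι : Y → ℕ) (e : ℕ → Y), Measurable ι ∧ ∀ y ∈ D, y ∈ measurableAtom (e (ι y)) := by
  classical
  obtain ⟨e, hDe⟩ := countable_iff_exists_subset_range.mp hDc
  have hex : ∀ y, ∃ i, y ∈ measurableAtom (e i) ∩ D ∪ Dᶜ := fun y => by
    by_cases hy : y ∈ D
    · obtain ⟨i, rfl⟩ := hDe hy
      exact ⟨i, .inl ⟨mem_measurableAtom_self _, hy⟩⟩
    · exact ⟨0, .inr hy⟩
  refine ⟨fun y => Nat.find (hex y), e,
    measurable_find hex fun i => (hD.measurableAtom_inter_of_countable hDc _).union hD.compl,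
    fun y hy => ?_⟩
  rcases Nat.find_spec (hex y) with h | h
  · exact h.1
  · exact absurd hy h

section AtomIndex

variable {μ : Measure Y} {ι : Y → ℕ} {e : ℕ → Y}

theorem aemeasurable_of_ae_mem_measurableAtom {β : Type*} [MeasurableSpace β]
    (hι : Measurable ι) (he : ∀ᵐ y ∂μ, y ∈ measurableAtom (e (ι y))) {S : Y → β}
    (hS : ∀ x y, y ∈ measurableAtom x → S y = S x) : AEMeasurable S μ :=
  ⟨fun y => S (e (ι y)), (measurable_of_countable fun k => S (e k)).comp hι,
    he.mono fun _ hy => hS _ _ hy⟩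

theorem lintegral_lintegral_swap_of_ae_mem_measurableAtom [SFinite μ] {Z : Type*}
    [MeasurableSpace Z] {Φ : Measure Z} [SFinite Φ]
    (hι : Measurable ι) (he : ∀ᵐ y ∂μ, y ∈ measurableAtom (e (ι y))) {F : Z → Y → ℝ≥0∞}
    (hF : ∀ y, Measurable fun z => F z y) (hFΦ : ∀ᵐ z ∂Φ, Measurable (F z)) :
    ∫⁻ y, ∫⁻ z, F z y ∂Φ ∂μ = ∫⁻ z, ∫⁻ y, F z y ∂μ ∂Φ := by
  have hG : Measurable fun p : Y × Z => F p.2 (e (ι p.1)) :=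
    (measurable_from_prod_countable_right (f := fun q : ℕ × Z => F q.2 (e q.1))
      fun k => hF (e k)).comp (hι.prodMap measurable_id)
  calc ∫⁻ y, ∫⁻ z, F z y ∂Φ ∂μ = ∫⁻ y, ∫⁻ z, F z (e (ι y)) ∂Φ ∂μ := by
        refine lintegral_congr_ae (he.mono fun y hy => lintegral_congr_ae ?_)
        exact hFΦ.mono fun z hz => hz.eq_of_mem_measurableAtom hy
    _ = ∫⁻ z, ∫⁻ y, F z (e (ι y)) ∂μ ∂Φ := lintegral_lintegral_swap hG.aemeasurable
    _ = ∫⁻ z, ∫⁻ y, F z y ∂μ ∂Φ := by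
        refine lintegral_congr_ae (hFΦ.mono fun z hz => lintegral_congr_ae ?_)
        exact he.mono fun y hy => (hz.eq_of_mem_measurableAtom hy).symm

end AtomIndex

/-- `A` only sees the coordinates in a countable set `I`, so adding the indicator of `Iᶜ` to a
density of `A` gives another one, and comparing their integrals shows `μ Iᶜ = 0`. -/
theorem exists_countable_ae_mem_of_integral_eq_one {μ : Measure Y} {A : Set (Y → ℝ)}
    (hA : MeasurableSet A) {g₀ : Y → ℝ} (hg₀ : g₀ ∈ A) (hmeas : ∀ g ∈ A, Measurable g)
    (hint : ∀ g ∈ A, ∫ y, g y ∂μ = 1) :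
    ∃ D : Set Y, D.Countable ∧ MeasurableSet D ∧ ∀ᵐ y ∂μ, y ∈ D := by
  obtain ⟨I, t, hIc, rfl⟩ := hA.eq_preimage_restrict_countable
  set g₁ : Y → ℝ := g₀ + Iᶜ.indicator 1
  have hg₁ : g₁ ∈ I.domRestrict ⁻¹' t := by
    have : I.domRestrict g₁ = I.domRestrict g₀ := by
      ext ⟨y, hy⟩
      simp [g₁, Set.domRestrict, hy]
    rwa [mem_preimage, this]
  have hdiff : g₁ - g₀ = Iᶜ.indicator 1 := add_sub_cancel_left _ _
  have hI : MeasurableSet Iᶜ :=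
    (measurable_indicator_const_iff (1 : ℝ)).mp (hdiff ▸ (hmeas _ hg₁).sub (hmeas g₀ hg₀))
  have hint₀ : Integrable g₀ μ := .of_integral_ne_zero (by simp [hint g₀ hg₀])
  have hint₁ : Integrable g₁ μ := .of_integral_ne_zero (by simp [hint g₁ hg₁])
  have hfin : μ Iᶜ ≠ ∞ := by
    have := (integrable_indicator_iff hI).mp (hdiff ▸ hint₁.sub hint₀)
    simpa [lt_top_iff_ne_top] using (integrableOn_const_iff (C := (1 : ℝ))).mp this
  have hzero : μ.real Iᶜ = 0 := by
    rw [← integral_indicator_one hI, ← hdiff, integral_sub' hint₁ hint₀, hint g₁ hg₁,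
      hint g₀ hg₀, sub_self]
  exact ⟨I, hIc, hI.of_compl, mem_ae_iff.mpr ((measureReal_eq_zero_iff hfin).mp hzero)⟩

theorem ae_lintegral_ofReal_apply_eq {μ : Measure Y} [SFinite μ] {D : Set Y}
    (hD : MeasurableSet D) (hDc : D.Countable) (hμD : ∀ᵐ y ∂μ, y ∈ D)
    {Φ : Measure (Y → ℝ)} [IsFiniteMeasure Φ]
    (hΦ : ∀ᵐ g ∂Φ, Measurable g ∧ (∀ y, 0 ≤ g y) ∧ ∫ y, g y ∂μ = 1) :
    ∀ᵐ y ∂μ, ∫⁻ g, ENNReal.ofReal (g y) ∂Φ = ENNReal.ofReal (∫ g, g y ∂Φ) := by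
  rcases isEmpty_or_nonempty Y with hY | hY
  · exact .of_forall isEmptyElim
  obtain ⟨ι, e, hι, he⟩ := exists_measurable_index_measurableAtom hD hDc
  have he' : ∀ᵐ y ∂μ, y ∈ measurableAtom (e (ι y)) := hμD.mono he
  have hmass : ∫⁻ y, ∫⁻ g, ENNReal.ofReal (g y) ∂Φ ∂μ = Φ univ := by
    rw [lintegral_lintegral_swap_of_ae_mem_measurableAtom hι he'
      (fun y => (measurable_pi_apply y).ennreal_ofReal)
      (hΦ.mono fun g hg => hg.1.ennreal_ofReal), ← lintegral_one]
    exact lintegral_congr_ae (hΦ.mono fun g hg =>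
      lintegral_ofReal_eq_one (.of_forall hg.2.1) hg.2.2)
  have hmeas : AEMeasurable (fun y => ∫⁻ g, ENNReal.ofReal (g y) ∂Φ) μ :=
    aemeasurable_of_ae_mem_measurableAtom hι he' fun x y hy =>
      lintegral_congr_ae <| hΦ.mono fun g hg =>
        congrArg ENNReal.ofReal (hg.1.eq_of_mem_measurableAtom hy)
  filter_upwards [ae_lt_top' hmeas (hmass ▸ measure_ne_top Φ univ)] with y hy
  have hnn : 0 ≤ᵐ[Φ] fun g => g y := hΦ.mono fun g hg => hg.2.1 y
  exact (ofReal_integral_eq_lintegral_ofReal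
    ⟨(measurable_pi_apply y).aestronglyMeasurable, (hasFiniteIntegral_iff_ofReal hnn).mpr hy⟩
    hnn).symm

end MeasurableAtom

section PosteriorNumerator

variable {Y : Type*} {fstar : Y → ℝ} {A : Set (Y → ℝ)}

/-- The numerator `L_{n,n}` of the posterior mass of `A`, with values in `ℝ≥0∞`. -/
noncomputable def posteriorNumerator (Pr : Measure (Y → ℝ)) (A : Set (Y → ℝ)) (fstar : Y → ℝ)
    {n : ℕ} (ω : Fin n → Y) : ℝ≥0∞ :=
  ∫⁻ g in A, ∏ i, ENNReal.ofReal (g (ω i) / fstar (ω i)) ∂Pr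

theorem posteriorNumerator_zero (Pr : Measure (Y → ℝ)) (ω : Fin 0 → Y) :
    posteriorNumerator Pr A fstar ω = Pr A := by
  simp [posteriorNumerator]

theorem posteriorNumerator_snoc (Pr : Measure (Y → ℝ)) {n : ℕ} (ω : Fin n → Y) (y : Y) :
    posteriorNumerator Pr A fstar (Fin.snoc ω y)
      = ∫⁻ g, ENNReal.ofReal (g y / fstar y)
          ∂(Pr.restrict A).withDensity fun g => ∏ i, ENNReal.ofReal (g (ω i) / fstar (ω i)) := by
  rw [lintegral_withDensity_eq_lintegral_mul _
    (Finset.measurable_prod _ fun i _ => ((measurable_pi_apply _).div_const _).ennreal_ofReal)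
    ((measurable_pi_apply y).div_const _).ennreal_ofReal]
  simp [posteriorNumerator, Fin.prod_univ_castSucc]

theorem ofReal_sqrt_setIntegral_le_posteriorNumerator {Pr : Measure (Y → ℝ)}
    (hA : MeasurableSet A) (hA₀ : ∀ g ∈ A, ∀ y, 0 ≤ g y) (hfpos : ∀ y, 0 < fstar y) {n : ℕ}
    (ω : Fin n → Y) :
    ENNReal.ofReal √(∫ g in A, ∏ i, g (ω i) / fstar (ω i) ∂Pr)
      ≤ posteriorNumerator Pr A fstar ω ^ (1 / 2 : ℝ) := by
  have hP : ∀ g ∈ A, ∀ i ∈ Finset.univ, 0 ≤ g (ω i) / fstar (ω i) :=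
    fun g hg i _ => div_nonneg (hA₀ g hg _) (hfpos _).le
  rw [Real.sqrt_eq_rpow, ← ENNReal.ofReal_rpow_of_nonneg
    (setIntegral_nonneg hA fun g hg => Finset.prod_nonneg (hP g hg)) (by norm_num)]
  gcongr
  exact (ofReal_integral_le_lintegral_ofReal _).trans_eq
    (setLIntegral_congr_fun hA fun g hg => ENNReal.ofReal_prod_of_nonneg (hP g hg))

end PosteriorNumerator

section NumeratorBound

variable {Y : Type*} [MeasurableSpace Y] {μ : Measure Y} [SFinite μ] {D : Set Y}
  {fstar : Y → ℝ} {A : Set (Y → ℝ)} {δ : ℝ}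

theorem lintegral_rpow_half_mixture_eq (hD : MeasurableSet D) (hDc : D.Countable)
    (hμD : ∀ᵐ y ∂μ, y ∈ D) (hfm : Measurable fstar) (hfpos : ∀ y, 0 < fstar y)
    {Φ : Measure (Y → ℝ)} [IsFiniteMeasure Φ]
    (hΦ : ∀ᵐ g ∂Φ, Measurable g ∧ (∀ y, 0 ≤ g y) ∧ ∫ y, g y ∂μ = 1)
    (hmix : Measurable fun y => ∫ g, g y ∂Φ) :
    ∫⁻ y, (∫⁻ g, ENNReal.ofReal (g y / fstar y) ∂Φ) ^ (1 / 2 : ℝ)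
        ∂μ.withDensity (fun y => ENNReal.ofReal (fstar y))
      = ∫⁻ y, ENNReal.ofReal (√(fstar y) * √(∫ g, g y ∂Φ)) ∂μ := by
  have hdiv : ∀ᵐ y ∂μ, ∫⁻ g, ENNReal.ofReal (g y / fstar y) ∂Φ
      = ENNReal.ofReal ((∫ g, g y ∂Φ) / fstar y) := by
    filter_upwards [ae_lintegral_ofReal_apply_eq hD hDc hμD hΦ] with y hy
    simp_rw [ENNReal.ofReal_div_of_pos (hfpos y), div_eq_mul_inv]
    rw [lintegral_mul_const _ (measurable_pi_apply y).ennreal_ofReal, hy]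
  calc _ = ∫⁻ y, ENNReal.ofReal ((∫ g, g y ∂Φ) / fstar y) ^ (1 / 2 : ℝ)
        ∂μ.withDensity (fun y => ENNReal.ofReal (fstar y)) :=
        lintegral_congr_ae <| (withDensity_absolutelyContinuous _ _).ae_le <|
          hdiv.mono fun y hy => by rw [hy]
    _ = ∫⁻ y, ENNReal.ofReal (fstar y)
          * ENNReal.ofReal ((∫ g, g y ∂Φ) / fstar y) ^ (1 / 2 : ℝ) ∂μ :=
        lintegral_withDensity_eq_lintegral_mul _ hfm.ennreal_ofReal
          ((hmix.div hfm).ennreal_ofReal.pow_const _)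
    _ = _ := lintegral_congr fun y => ENNReal.ofReal_mul_ofReal_div_rpow_half (hfpos y)
          (integral_nonneg_of_ae (hΦ.mono fun g hg => hg.2.1 y))

theorem lintegral_rpow_half_lintegral_div_le (hD : MeasurableSet D) (hDc : D.Countable)
    (hμD : ∀ᵐ y ∂μ, y ∈ D) (hfm : Measurable fstar) (hfpos : ∀ y, 0 < fstar y)
    (hfint : ∫ y, fstar y ∂μ = 1) (hA : MeasurableSet A)
    (hdens : ∀ g ∈ A, Measurable g ∧ (∀ y, 0 ≤ g y) ∧ ∫ y, g y ∂μ = 1)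
    (hsep : ∀ g ∈ A, δ < 1 / 2 * ∫ y, (√(fstar y) - √(g y)) ^ 2 ∂μ)
    (hconv : ∀ Φ : Measure (Y → ℝ), IsProbabilityMeasure Φ → Φ A = 1 →
      (fun y => ∫ g, g y ∂Φ) ∈ A)
    (hδ : δ < 1) {Q : Measure (Y → ℝ)} (hQ : Q Aᶜ = 0) :
    ∫⁻ y, (∫⁻ g, ENNReal.ofReal (g y / fstar y) ∂Q) ^ (1 / 2 : ℝ)
        ∂μ.withDensity (fun y => ENNReal.ofReal (fstar y))
      ≤ ENNReal.ofReal (1 - δ) * Q univ ^ (1 / 2 : ℝ) := by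
  set c := Q univ
  rcases eq_or_ne c ∞ with hc | hc
  · rw [hc, ENNReal.top_rpow_of_pos (by norm_num), ENNReal.mul_top (by simpa using hδ)]
    exact le_top
  rcases eq_or_ne c 0 with hc₀ | hc₀
  · simp [Measure.measure_univ_eq_zero.mp hc₀]
  set Φ := c⁻¹ • Q
  have hQΦ : Q = c • Φ := by rw [smul_smul, ENNReal.mul_inv_cancel hc₀ hc, one_smul]
  have hΦ : IsProbabilityMeasure Φ := ⟨by simp [Φ, c, ENNReal.inv_mul_cancel hc₀ hc]⟩
  have hΦA : Φ Aᶜ = 0 := by simp [Φ, hQ]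
  have hΦae : ∀ᵐ g ∂Φ, g ∈ A := mem_ae_iff.mpr hΦA
  have hmixA := hconv Φ hΦ ((prob_compl_eq_zero_iff hA).mp hΦA)
  obtain ⟨hmixm, hmix₀, hmix₁⟩ := hdens _ hmixA
  have hfint' : Integrable fstar μ := .of_integral_ne_zero (by simp [hfint])
  have hmixint : Integrable (fun y => ∫ g, g y ∂Φ) μ := .of_integral_ne_zero (by simp [hmix₁])
  have haff : ∫ y, √(fstar y) * √(∫ g, g y ∂Φ) ∂μ ≤ 1 - δ := by
    have := hsep _ hmixA
    rw [half_integral_sq_sub_sqrt hfint' hmixint (.of_forall fun y => (hfpos y).le)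
      (.of_forall hmix₀), hfint, hmix₁] at this
    linarith
  calc _ = c ^ (1 / 2 : ℝ) * ∫⁻ y, (∫⁻ g, ENNReal.ofReal (g y / fstar y) ∂Φ) ^ (1 / 2 : ℝ)
        ∂μ.withDensity (fun y => ENNReal.ofReal (fstar y)) := by
        simp_rw [hQΦ, lintegral_smul_measure, smul_eq_mul,
          ENNReal.mul_rpow_of_nonneg _ _ (by norm_num : (0 : ℝ) ≤ 1 / 2)]
        exact lintegral_const_mul' _ _ (ENNReal.rpow_ne_top_of_nonneg (by norm_num) hc)
    _ = c ^ (1 / 2 : ℝ) * ENNReal.ofReal (∫ y, √(fstar y) * √(∫ g, g y ∂Φ) ∂μ) := by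
        rw [lintegral_rpow_half_mixture_eq hD hDc hμD hfm hfpos
          (hΦae.mono hdens) hmixm,
          ofReal_integral_eq_lintegral_ofReal (integrable_sqrt_mul_sqrt hfint' hmixint)
            (.of_forall fun y => by positivity)]
    _ ≤ ENNReal.ofReal (1 - δ) * c ^ (1 / 2 : ℝ) := by
        rw [mul_comm]
        gcongr

theorem lintegral_rpow_half_posteriorNumerator_le (hD : MeasurableSet D) (hDc : D.Countable)
    (hμD : ∀ᵐ y ∂μ, y ∈ D) (hfm : Measurable fstar) (hfpos : ∀ y, 0 < fstar y)
    (hfint : ∫ y, fstar y ∂μ = 1) (hA : MeasurableSet A)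
    (hdens : ∀ g ∈ A, Measurable g ∧ (∀ y, 0 ≤ g y) ∧ ∫ y, g y ∂μ = 1)
    (hsep : ∀ g ∈ A, δ < 1 / 2 * ∫ y, (√(fstar y) - √(g y)) ^ 2 ∂μ)
    (hconv : ∀ Φ : Measure (Y → ℝ), IsProbabilityMeasure Φ → Φ A = 1 →
      (fun y => ∫ g, g y ∂Φ) ∈ A)
    (hδ : δ < 1) (Pr : Measure (Y → ℝ))
    [IsProbabilityMeasure (μ.withDensity fun y => ENNReal.ofReal (fstar y))] (n : ℕ) :
    ∫⁻ ω, posteriorNumerator Pr A fstar ω ^ (1 / 2 : ℝ)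
        ∂Measure.pi (fun _ : Fin n => μ.withDensity fun y => ENNReal.ofReal (fstar y))
      ≤ Pr A ^ (1 / 2 : ℝ) * ENNReal.ofReal (1 - δ) ^ n := by
  set ν := μ.withDensity fun y => ENNReal.ofReal (fstar y)
  induction n with
  | zero => simp [posteriorNumerator_zero]
  | succ n ih =>
    have hstep (ω : Fin n → Y) :
        ∫⁻ y, posteriorNumerator Pr A fstar (Fin.snoc ω y) ^ (1 / 2 : ℝ) ∂ν
          ≤ ENNReal.ofReal (1 - δ) * posteriorNumerator Pr A fstar ω ^ (1 / 2 : ℝ) := by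
      simp_rw [posteriorNumerator_snoc]
      refine (lintegral_rpow_half_lintegral_div_le hD hDc hμD hfm hfpos hfint hA hdens hsep hconv
        hδ ?_).trans_eq ?_
      · exact withDensity_absolutelyContinuous _ _ (by simp [Measure.restrict_apply hA.compl])
      · rw [withDensity_apply _ MeasurableSet.univ, Measure.restrict_univ]
        rfl
    calc _ ≤ ∫⁻ ω, ∫⁻ y, posteriorNumerator Pr A fstar (Fin.snoc ω y) ^ (1 / 2 : ℝ) ∂ν
            ∂Measure.pi (fun _ => ν) := lintegral_pi_fin_succ_le _
      _ ≤ ∫⁻ ω, ENNReal.ofReal (1 - δ) * posteriorNumerator Pr A fstar ω ^ (1 / 2 : ℝ)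
            ∂Measure.pi (fun _ => ν) := lintegral_mono hstep
      _ ≤ ENNReal.ofReal (1 - δ) * (Pr A ^ (1 / 2 : ℝ) * ENNReal.ofReal (1 - δ) ^ n) := by
          rw [lintegral_const_mul' _ _ ENNReal.ofReal_ne_top]
          gcongr
      _ = Pr A ^ (1 / 2 : ℝ) * ENNReal.ofReal (1 - δ) ^ (n + 1) := by ring

end NumeratorBound

theorem numerator_bound_general
    {Y : Type*} [MeasurableSpace Y] (μ : Measure Y) [SigmaFinite μ]
    (Pr : Measure (Y → ℝ)) [IsProbabilityMeasure Pr]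
    (fstar : Y → ℝ)
    (hstarmeas : Measurable fstar)
    (hstarint : ∫ y, fstar y ∂μ = 1) (hstarpos : ∀ y, 0 < fstar y)
    (n : ℕ) (ε d : ℝ)
    (A : Set (Y → ℝ)) (hA : MeasurableSet A)
    (hdens : ∀ g ∈ A, Measurable g ∧ (∀ y, 0 ≤ g y) ∧ ∫ y, g y ∂μ = 1)
    (hsep : ∀ g ∈ A,
      d * ε^2 < (1/2) * ∫ y, (Real.sqrt (fstar y) - Real.sqrt (g y))^2 ∂μ)
    (hconv : ∀ Φ : Measure (Y → ℝ), IsProbabilityMeasure Φ → Φ A = 1 →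
      (fun y => ∫ g, g y ∂Φ) ∈ A) :
    ∫ ω : Fin n → Y,
        Real.sqrt (∫ g in A, ∏ i : Fin n, g (ω i) / fstar (ω i) ∂Pr)
        ∂(Measure.pi fun _ : Fin n => μ.withDensity fun y => ENNReal.ofReal (fstar y))
      ≤ Real.sqrt (Pr A).toReal * Real.exp (-(d * n * ε^2)) := by
  rcases A.eq_empty_or_nonempty with rfl | ⟨g₀, hg₀⟩
  · simp only [Measure.restrict_empty, integral_zero_measure, Real.sqrt_zero, integral_zero]
    positivity
  have hstarnn : 0 ≤ᵐ[μ] fstar := .of_forall fun y => (hstarpos y).le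
  have := isProbabilityMeasure_withDensity_ofReal hstarnn hstarint
  obtain ⟨D, hDc, hD, hμD⟩ := exists_countable_ae_mem_of_integral_eq_one hA hg₀
    (fun g hg => (hdens g hg).1) (fun g hg => (hdens g hg).2.2)
  have hδ : d * ε ^ 2 < 1 := (hsep g₀ hg₀).trans_le <| half_integral_sq_sub_sqrt_le_one
    hstarnn (.of_forall (hdens g₀ hg₀).2.1) hstarint (hdens g₀ hg₀).2.2
  rw [← ENNReal.ofReal_le_ofReal_iff (by positivity)]
  calc _ ≤ _ := ofReal_integral_le_lintegral_ofReal _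
    _ ≤ _ := lintegral_mono (ofReal_sqrt_setIntegral_le_posteriorNumerator hA
        (fun g hg => (hdens g hg).2.1) hstarpos)
    _ ≤ Pr A ^ (1 / 2 : ℝ) * ENNReal.ofReal (1 - d * ε ^ 2) ^ n :=
        lintegral_rpow_half_posteriorNumerator_le hD hDc hμD hstarmeas hstarpos hstarint hA hdens
          hsep hconv hδ Pr n
    _ ≤ _ := by
        rw [ENNReal.ofReal_mul (Real.sqrt_nonneg _), Real.sqrt_eq_rpow,
          ← ENNReal.ofReal_rpow_of_nonneg ENNReal.toReal_nonneg (by norm_num),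
          ENNReal.ofReal_toReal (measure_ne_top _ _), show d * n * ε ^ 2 = n * (d * ε ^ 2) by ring]
        gcongr
        exact ENNReal.ofReal_one_sub_pow_le_ofReal_exp _ n

/-- fundamental numerator bound. If Aₙ is convex (closed under
mixtures) and dεₙ²-separated from f⋆ with respect to h = H²/2, then the
numerator L_{n,n} = ∫_{Aₙ} ∏ᵢ (g(Yᵢ)/f⋆(Yᵢ)) dΠ(g) satisfies
E[L_{n,n}^{1/2}] ≤ Π(Aₙ)^{1/2} e^{−dnεₙ²}. -/
theorem numerator_bound
    {Y : Type*} [MeasurableSpace Y] (μ : Measure Y) [SigmaFinite μ]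
    (Pr : Measure (Y → ℝ)) [IsProbabilityMeasure Pr]
    (fstar : Y → ℝ)
    (hstarmeas : Measurable fstar) (hstarnn : ∀ y, 0 ≤ fstar y)
    (hstarint : ∫ y, fstar y ∂μ = 1) (hstarpos : ∀ y, 0 < fstar y)
    (n : ℕ) (ε d : ℝ) (hε : 0 < ε) (hd : 0 < d)
    (A : Set (Y → ℝ)) (hA : MeasurableSet A)
    (hdens : ∀ g ∈ A, Measurable g ∧ (∀ y, 0 ≤ g y) ∧ ∫ y, g y ∂μ = 1)
    (hsep : ∀ g ∈ A,
      d * ε^2 < (1/2) * ∫ y, (Real.sqrt (fstar y) - Real.sqrt (g y))^2 ∂μ)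
    (hconv : ∀ Φ : Measure (Y → ℝ), IsProbabilityMeasure Φ → Φ A = 1 →
      (fun y => ∫ g, g y ∂Φ) ∈ A) :
    ∫ ω : Fin n → Y,
        Real.sqrt (∫ g in A, ∏ i : Fin n, g (ω i) / fstar (ω i) ∂Pr)
        ∂(Measure.pi fun _ : Fin n => μ.withDensity fun y => ENNReal.ofReal (fstar y))
      ≤ Real.sqrt (Pr A).toReal * Real.exp (-(d * n * ε^2)) :=
  numerator_bound_general μ Pr fstar hstarmeas hstarint hstarpos n ε d A hA hdens hsep hconv
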